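/- For every even integer ℓ > 0 there is a constant C_ℓ > 0 such that for every squarefree n ∈ S with n > 1, every z ∈ [0,1]² and every s > 0: ∫_{B(s,z) ∩ [0,1]²} |s_n(x)|^ℓ dx ≤ C_ℓ · s² · max_{t=1,2} ( M_t(n,ℓ)/N^ℓ + (1/N^ℓ) Σ' 1/(s · |ξ_t¹ + ⋯ + ξ_t^ℓ|) ), where M_t(n,ℓ) = #{(ξ¹,…,ξ^ℓ) ∈ Λ_n^ℓ : ξ_t¹ + ⋯ + ξ_t^ℓ = 0} and Σ' runs over the ℓ-tuples (ξ¹,…,ξ^ℓ) ∈ Λ_n^ℓ with ξ_t¹ + ⋯ + ξ_t^ℓ ≠ 0. -/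

import Mathlib

open MeasureTheory Filter Real

noncomputable section

/-- The set of lattice points `ξ = (ξ₁, ξ₂) ∈ ℤ²` with `ξ₁² + ξ₂² = n`
(every such point has `|ξᵢ| ≤ n`, so this `Finset` captures all of them). -/
def Lambda (n : ℕ) : Finset (ℤ × ℤ) :=
  (Finset.Icc (-(n : ℤ)) n ×ˢ Finset.Icc (-(n : ℤ)) n).filter
    (fun ξ => ξ.1 ^ 2 + ξ.2 ^ 2 = (n : ℤ))

/-- `N = N(n)`, the number of lattice points on the circle of radius `√n`. -/
def Nlat (n : ℕ) : ℕ := (Lambda n).card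

/-- `S`, the set of (positive) integers representable as a sum of two squares. -/
def S2 : Set ℕ := {n | 1 ≤ n ∧ (Lambda n).Nonempty}

/-- `S'` has density one in `T`. -/
def DensityOne (S' T : Set ℕ) : Prop :=
  Tendsto (fun X : ℕ => ((S' ∩ Set.Iic X).ncard : ℝ) / ((T ∩ Set.Iic X).ncard : ℝ))
    atTop (nhds 1)

/-- The `t`-th coordinate of a lattice point. -/
def coord (t : Fin 2) (ξ : ℤ × ℤ) : ℤ := if t = 0 then ξ.1 else ξ.2

/-- `ν̂ₙ(4) = (1/(N n²)) Σ_{ξ∈Λₙ} (ξ₁⁴ − 6ξ₁²ξ₂² + ξ₂⁴)`. -/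
def nu4 (n : ℕ) : ℝ :=
  (∑ ξ ∈ Lambda n, ((ξ.1 : ℝ) ^ 4 - 6 * (ξ.1 : ℝ) ^ 2 * (ξ.2 : ℝ) ^ 2 + (ξ.2 : ℝ) ^ 4)) /
    ((Nlat n : ℝ) * (n : ℝ) ^ 2)

/-- The closed axis-parallel square in `ℝ²` of side `s` centered at `z`. -/
def Box2 (s : ℝ) (z : ℝ × ℝ) : Set (ℝ × ℝ) :=
  Set.Icc (z.1 - s / 2) (z.1 + s / 2) ×ˢ Set.Icc (z.2 - s / 2) (z.2 + s / 2)

/-- The unit square `[0,1]² ⊆ ℝ²`. -/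
def USq : Set (ℝ × ℝ) := Set.Icc (0 : ℝ) 1 ×ˢ Set.Icc (0 : ℝ) 1

/-- Squarefree sums of two squares greater than 1. -/
def Ssf : Set ℕ := {n | n ∈ S2 ∧ Squarefree n ∧ 1 < n}

/-- `sₙ(x) = (1/N) Σ_{ξ∈Λₙ} (cos(2πξ₁x₁) + cos(2πξ₂x₂) − cos(2πξ₁x₁)cos(2πξ₂x₂))`. -/
def sn (n : ℕ) (x : ℝ × ℝ) : ℝ :=
  (1 / (Nlat n : ℝ)) * ∑ ξ ∈ Lambda n,
    (Real.cos (2 * π * ξ.1 * x.1) + Real.cos (2 * π * ξ.2 * x.2) -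
      Real.cos (2 * π * ξ.1 * x.1) * Real.cos (2 * π * ξ.2 * x.2))

/-!
Put `F(u, v) = ∑_{ξ ∈ Λₙ} cos(2πξ₁u) cos(2πξ₂v)`, so that
`N sₙ(x) = F(x₁, 0) + F(0, x₂) - F(x₁, x₂)` and `|sₙ|^ℓ` is at most `3^(ℓ-1) N^(-ℓ)` times the
sum of the `ℓ`-th powers of these three terms; for even `ℓ` these powers need no absolute values.
As `Λₙ` is symmetric under `ξ₁ ↦ -ξ₁` and `ξ₂ ↦ -ξ₂`, `F(u, v) = ∑ e(ξ₁u) e(ξ₂v)`, so `F^ℓ` is a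
sum over `ℓ`-tuples of `e((∑ᵢ ξ₁ⁱ) u) e((∑ᵢ ξ₂ⁱ) v)`. On a box of side `s` the integral of such a
term factors, and each factor is at most `s`, or at most `1 / |m|` when the frequency `m` is
nonzero.
-/

open Complex in
def expTwoPiI (x : ℝ) : ℂ := exp ((2 * π * x : ℝ) * I)

lemma norm_expTwoPiI (x : ℝ) : ‖expTwoPiI x‖ = 1 :=
  Complex.norm_exp_ofReal_mul_I _

@[fun_prop]
lemma continuous_expTwoPiI : Continuous expTwoPiI := by
  unfold expTwoPiI; fun_prop

lemma prod_expTwoPiI {ι : Type*} (s : Finset ι) (f : ι → ℝ) :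
    ∏ i ∈ s, expTwoPiI (f i) = expTwoPiI (∑ i ∈ s, f i) := by
  simp only [expTwoPiI, ← Complex.exp_sum, Finset.mul_sum, Complex.ofReal_sum, Finset.sum_mul]

lemma ofReal_cos_two_pi_mul (x : ℝ) :
    (Real.cos (2 * π * x) : ℂ) = (expTwoPiI x + expTwoPiI (-x)) / 2 := by
  rw [Complex.ofReal_cos, Complex.cos, expTwoPiI, expTwoPiI]
  push_cast
  ring_nf

lemma norm_setIntegral_Icc_le_of_norm_le_one {f : ℝ → ℂ} (hf : ∀ u, ‖f u‖ ≤ 1)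
    {a b s : ℝ} (hab : a ≤ b) (hs : b - a ≤ s) : ‖∫ u in Set.Icc a b, f u‖ ≤ s := by
  calc ‖∫ u in Set.Icc a b, f u‖ ≤ 1 * volume.real (Set.Icc a b) :=
        norm_setIntegral_le_of_norm_le_const measure_Icc_lt_top (fun u _ => hf u)
    _ ≤ s := by rwa [Real.volume_real_Icc_of_le hab, one_mul]

lemma norm_intervalIntegral_expTwoPiI_mul_le {m : ℝ} (hm : m ≠ 0) (a b : ℝ) :
    ‖∫ u in a..b, expTwoPiI (m * u)‖ ≤ 1 / (π * |m|) := by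
  set c : ℂ := (2 * π * m : ℝ) * Complex.I
  have hc : c ≠ 0 := by simp [c, hm, Real.pi_ne_zero]
  have hexp : ∀ u : ℝ, expTwoPiI (m * u) = Complex.exp (c * u) := fun u => by
    simp only [expTwoPiI, c]; push_cast; ring_nf
  have hnorm : ∀ u : ℝ, ‖Complex.exp (c * u)‖ = 1 := fun u => by rw [← hexp, norm_expTwoPiI]
  have hcnorm : ‖c‖ = 2 * π * |m| := by
    simp [c, abs_of_pos Real.pi_pos]
  simp_rw [hexp]
  rw [integral_exp_mul_complex hc, norm_div, hcnorm]
  calc ‖Complex.exp (c * b) - Complex.exp (c * a)‖ / (2 * π * |m|)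
      ≤ (‖Complex.exp (c * b)‖ + ‖Complex.exp (c * a)‖) / (2 * π * |m|) := by
        gcongr; exact norm_sub_le _ _
    _ = 1 / (π * |m|) := by
        rw [hnorm, hnorm]; field_simp; ring

def freqBound (s : ℝ) (m : ℤ) : ℝ := if m = 0 then s else 1 / |(m : ℝ)|

lemma norm_setIntegral_Icc_expTwoPiI_le (m : ℤ) {a b s : ℝ} (hab : a ≤ b) (hs : b - a ≤ s) :
    ‖∫ u in Set.Icc a b, expTwoPiI (m * u)‖ ≤ freqBound s m := by
  unfold freqBound
  split_ifs with hm
  · exact norm_setIntegral_Icc_le_of_norm_le_one (fun u => (norm_expTwoPiI _).le) hab hs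
  have hm' : (m : ℝ) ≠ 0 := Int.cast_ne_zero.mpr hm
  rw [integral_Icc_eq_integral_Ioc, ← intervalIntegral.integral_of_le hab]
  refine (norm_intervalIntegral_expTwoPiI_mul_le hm' a b).trans ?_
  gcongr
  exact le_mul_of_one_le_left (abs_nonneg _) (by linarith [Real.pi_gt_three])

lemma freqBound_nonneg {s : ℝ} (hs : 0 ≤ s) (m : ℤ) : 0 ≤ freqBound s m := by
  unfold freqBound; split_ifs <;> positivity

def cosSum (Λ : Finset (ℤ × ℤ)) (u v : ℝ) : ℝ :=
  ∑ ξ ∈ Λ, Real.cos (2 * π * ξ.1 * u) * Real.cos (2 * π * ξ.2 * v)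

@[fun_prop]
lemma continuous_cosSum (Λ : Finset (ℤ × ℤ)) : Continuous fun x : ℝ × ℝ => cosSum Λ x.1 x.2 := by
  unfold cosSum; fun_prop

-- Each cosine product is the average of four exponential products, which the sign symmetries
-- of `Λ` make equal after summation.
lemma ofReal_cosSum {Λ : Finset (ℤ × ℤ)} (h₁ : ∀ ξ ∈ Λ, (-ξ.1, ξ.2) ∈ Λ)
    (h₂ : ∀ ξ ∈ Λ, (ξ.1, -ξ.2) ∈ Λ) (u v : ℝ) :
    (cosSum Λ u v : ℂ) = ∑ ξ ∈ Λ, expTwoPiI (ξ.1 * u) * expTwoPiI (ξ.2 * v) := by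
  set E : ℤ × ℤ → ℂ := fun ξ => expTwoPiI (ξ.1 * u) * expTwoPiI (ξ.2 * v)
  have hterm : ∀ ξ : ℤ × ℤ, ((Real.cos (2 * π * ξ.1 * u) * Real.cos (2 * π * ξ.2 * v) : ℝ) : ℂ)
      = (E ξ + E (-ξ.1, ξ.2) + E (ξ.1, -ξ.2) + E (-ξ)) / 4 := fun ξ => by
    rw [Complex.ofReal_mul, mul_assoc (2 * π), mul_assoc (2 * π), ofReal_cos_two_pi_mul,
      ofReal_cos_two_pi_mul]
    simp only [E, Prod.fst_neg, Prod.snd_neg, Int.cast_neg, neg_mul]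
    ring
  have hsym : ∀ g : ℤ × ℤ → ℤ × ℤ, Function.Involutive g → (∀ ξ ∈ Λ, g ξ ∈ Λ) →
      ∑ ξ ∈ Λ, E (g ξ) = ∑ ξ ∈ Λ, E ξ := fun g hg hΛ =>
    Finset.sum_nbij' g g hΛ hΛ (fun ξ _ => hg ξ) (fun ξ _ => hg ξ) (fun _ _ => rfl)
  rw [cosSum, Complex.ofReal_sum]
  simp only [hterm, ← Finset.sum_div, Finset.sum_add_distrib]
  rw [hsym (fun ξ => (-ξ.1, ξ.2)) (fun ξ => by simp) h₁,
    hsym (fun ξ => (ξ.1, -ξ.2)) (fun ξ => by simp) h₂,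
    hsym Neg.neg neg_involutive (fun ξ hξ => h₁ _ (h₂ ξ hξ))]
  ring

lemma ofReal_cosSum_pow {Λ : Finset (ℤ × ℤ)} (h₁ : ∀ ξ ∈ Λ, (-ξ.1, ξ.2) ∈ Λ)
    (h₂ : ∀ ξ ∈ Λ, (ξ.1, -ξ.2) ∈ Λ) (ℓ : ℕ) (u v : ℝ) :
    ((cosSum Λ u v ^ ℓ : ℝ) : ℂ) = ∑ p ∈ Fintype.piFinset (fun _ : Fin ℓ => Λ),
      expTwoPiI ((∑ i, (p i).1 : ℤ) * u) * expTwoPiI ((∑ i, (p i).2 : ℤ) * v) := by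
  rw [Complex.ofReal_pow, ofReal_cosSum h₁ h₂, Finset.sum_pow']
  refine Finset.sum_congr rfl fun p _ => ?_
  simp only [Finset.prod_mul_distrib, prod_expTwoPiI, Int.cast_sum, Finset.sum_mul]

lemma integral_cosSum_pow_le {Λ : Finset (ℤ × ℤ)} (h₁ : ∀ ξ ∈ Λ, (-ξ.1, ξ.2) ∈ Λ)
    (h₂ : ∀ ξ ∈ Λ, (ξ.1, -ξ.2) ∈ Λ) (ℓ : ℕ) {α β : ℝ → ℝ} (hα : Continuous α)
    (hβ : Continuous β) (a₁ b₁ a₂ b₂ : ℝ) :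
    ∫ x in Set.Icc a₁ b₁ ×ˢ Set.Icc a₂ b₂, cosSum Λ (α x.1) (β x.2) ^ ℓ ≤
      ∑ p ∈ Fintype.piFinset (fun _ : Fin ℓ => Λ),
        ‖∫ u in Set.Icc a₁ b₁, expTwoPiI ((∑ i, (p i).1 : ℤ) * α u)‖ *
          ‖∫ v in Set.Icc a₂ b₂, expTwoPiI ((∑ i, (p i).2 : ℤ) * β v)‖ := by
  have hint : ∀ m₁ m₂ : ℤ, IntegrableOn
      (fun x : ℝ × ℝ => expTwoPiI (m₁ * α x.1) * expTwoPiI (m₂ * β x.2))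
      (Set.Icc a₁ b₁ ×ˢ Set.Icc a₂ b₂) := fun m₁ m₂ => by
    rw [Set.Icc_prod_Icc]; exact Continuous.integrableOn_Icc (by fun_prop)
  calc ∫ x in Set.Icc a₁ b₁ ×ˢ Set.Icc a₂ b₂, cosSum Λ (α x.1) (β x.2) ^ ℓ
      ≤ ‖((∫ x in Set.Icc a₁ b₁ ×ˢ Set.Icc a₂ b₂, cosSum Λ (α x.1) (β x.2) ^ ℓ : ℝ) : ℂ)‖ := by
        rw [Complex.norm_real]; exact le_abs_self _
    _ = ‖∑ p ∈ Fintype.piFinset (fun _ : Fin ℓ => Λ), ∫ x in Set.Icc a₁ b₁ ×ˢ Set.Icc a₂ b₂,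
          expTwoPiI ((∑ i, (p i).1 : ℤ) * α x.1) * expTwoPiI ((∑ i, (p i).2 : ℤ) * β x.2)‖ := by
        rw [← integral_complex_ofReal, ← integral_finsetSum _ fun p _ => hint _ _]
        simp only [ofReal_cosSum_pow h₁ h₂]
    _ ≤ _ := by
        refine (norm_sum_le _ _).trans (le_of_eq (Finset.sum_congr rfl fun p _ => ?_))
        rw [← norm_mul, Measure.volume_eq_prod, setIntegral_prod_mul
          (fun u => expTwoPiI ((∑ i, (p i).1 : ℤ) * α u))
          (fun v => expTwoPiI ((∑ i, (p i).2 : ℤ) * β v))]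

lemma sum_freqBound_mul_eq {ι : Type*} (P : Finset ι) (σ : ι → ℤ) (s : ℝ) :
    ∑ p ∈ P, freqBound s (σ p) * s =
      s ^ 2 * ((P.filter (σ · = 0)).card + ∑ p ∈ P.filter (σ · ≠ 0), 1 / (s * |(σ p : ℝ)|)) := by
  rw [← Finset.sum_filter_add_sum_filter_not P (σ · = 0), mul_add, Finset.mul_sum]
  congr 1
  · rw [Finset.sum_congr rfl fun p hp => by rw [freqBound, if_pos (Finset.mem_filter.mp hp).2],
      Finset.sum_const, nsmul_eq_mul]
    ring
  · refine Finset.sum_congr rfl fun p hp => ?_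
    rw [freqBound, if_neg (Finset.mem_filter.mp hp).2]
    rcases eq_or_ne s 0 with rfl | hs
    · simp
    · field_simp

lemma neg_fst_mem_Lambda {n : ℕ} {ξ : ℤ × ℤ} (hξ : ξ ∈ Lambda n) : (-ξ.1, ξ.2) ∈ Lambda n := by
  simp only [Lambda, Finset.mem_filter, Finset.mem_product, Finset.mem_Icc, neg_sq] at hξ ⊢
  omega

lemma neg_snd_mem_Lambda {n : ℕ} {ξ : ℤ × ℤ} (hξ : ξ ∈ Lambda n) : (ξ.1, -ξ.2) ∈ Lambda n := by
  simp only [Lambda, Finset.mem_filter, Finset.mem_product, Finset.mem_Icc, neg_sq] at hξ ⊢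
  omega

def latticeBound (n ℓ : ℕ) (t : Fin 2) (s : ℝ) : ℝ :=
  (Set.ncard {ξ : Fin ℓ → ℤ × ℤ | (∀ i, ξ i ∈ Lambda n) ∧ ∑ i, coord t (ξ i) = 0} : ℝ) /
      (Nlat n : ℝ) ^ ℓ +
    (1 / (Nlat n : ℝ) ^ ℓ) *
      ∑ ξ ∈ (Fintype.piFinset fun _ : Fin ℓ => Lambda n).filter (fun ξ => ∑ i, coord t (ξ i) ≠ 0),
        1 / (s * |((∑ i, coord t (ξ i) : ℤ) : ℝ)|)

lemma sum_freqBound_eq_latticeBound (n ℓ : ℕ) (t : Fin 2) (s : ℝ) :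
    1 / (Nlat n : ℝ) ^ ℓ * ∑ p ∈ Fintype.piFinset (fun _ : Fin ℓ => Lambda n),
      freqBound s (∑ i, coord t (p i)) * s = s ^ 2 * latticeBound n ℓ t s := by
  have hncard : {ξ : Fin ℓ → ℤ × ℤ | (∀ i, ξ i ∈ Lambda n) ∧ ∑ i, coord t (ξ i) = 0} =
      ↑((Fintype.piFinset fun _ : Fin ℓ => Lambda n).filter (fun ξ => ∑ i, coord t (ξ i) = 0)) := by
    ext ξ; simp
  rw [sum_freqBound_mul_eq, latticeBound, hncard, Set.ncard_coe_finset]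
  push_cast
  ring

lemma integral_cosSum_Lambda_pow_le_latticeBound_zero (n ℓ : ℕ) {β : ℝ → ℝ} (hβ : Continuous β)
    {a₁ b₁ a₂ b₂ s : ℝ} (h₁ : a₁ ≤ b₁) (h₂ : a₂ ≤ b₂) (hs₁ : b₁ - a₁ ≤ s) (hs₂ : b₂ - a₂ ≤ s) :
    ∫ x in Set.Icc a₁ b₁ ×ˢ Set.Icc a₂ b₂, (cosSum (Lambda n) x.1 (β x.2) / Nlat n) ^ ℓ ≤
      s ^ 2 * latticeBound n ℓ 0 s := by
  simp_rw [div_pow, integral_div, div_eq_inv_mul, ← one_div]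
  rw [← sum_freqBound_eq_latticeBound]
  gcongr
  refine (integral_cosSum_pow_le (fun _ => neg_fst_mem_Lambda) (fun _ => neg_snd_mem_Lambda) ℓ
    continuous_id hβ a₁ b₁ a₂ b₂).trans (Finset.sum_le_sum fun p _ => ?_)
  exact mul_le_mul (norm_setIntegral_Icc_expTwoPiI_le _ h₁ hs₁)
    (norm_setIntegral_Icc_le_of_norm_le_one (fun _ => (norm_expTwoPiI _).le) h₂ hs₂)
    (norm_nonneg _) (freqBound_nonneg (by linarith) _)

lemma integral_cosSum_Lambda_pow_le_latticeBound_one (n ℓ : ℕ) {α : ℝ → ℝ} (hα : Continuous α)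
    {a₁ b₁ a₂ b₂ s : ℝ} (h₁ : a₁ ≤ b₁) (h₂ : a₂ ≤ b₂) (hs₁ : b₁ - a₁ ≤ s) (hs₂ : b₂ - a₂ ≤ s) :
    ∫ x in Set.Icc a₁ b₁ ×ˢ Set.Icc a₂ b₂, (cosSum (Lambda n) (α x.1) x.2 / Nlat n) ^ ℓ ≤
      s ^ 2 * latticeBound n ℓ 1 s := by
  simp_rw [div_pow, integral_div, div_eq_inv_mul, ← one_div]
  rw [← sum_freqBound_eq_latticeBound]
  gcongr
  refine (integral_cosSum_pow_le (fun _ => neg_fst_mem_Lambda) (fun _ => neg_snd_mem_Lambda) ℓ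
    hα continuous_id a₁ b₁ a₂ b₂).trans (Finset.sum_le_sum fun p _ => ?_)
  rw [mul_comm]
  exact mul_le_mul (norm_setIntegral_Icc_expTwoPiI_le _ h₂ hs₂)
    (norm_setIntegral_Icc_le_of_norm_le_one (fun _ => (norm_expTwoPiI _).le) h₁ hs₁)
    (norm_nonneg _) (freqBound_nonneg (by linarith) _)

lemma abs_add_sub_pow_le (a b c : ℝ) (k : ℕ) :
    |a + b - c| ^ (k + 1) ≤ 3 ^ k * (|a| ^ (k + 1) + |b| ^ (k + 1) + |c| ^ (k + 1)) := by
  have hjensen := pow_sum_le_card_mul_sum_pow (s := Finset.univ) (f := ![|a|, |b|, |c|])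
    (fun i _ => by fin_cases i <;> simp) k
  simp only [Fin.sum_univ_three, Finset.card_univ, Fintype.card_fin,
    Matrix.cons_val_zero, Matrix.cons_val_one, Matrix.cons_val_two, Matrix.tail_cons,
    Matrix.head_cons] at hjensen
  refine le_trans ?_ hjensen
  gcongr
  calc |a + b - c| ≤ |a| + |b| + |-c| := by rw [sub_eq_add_neg]; exact abs_add_three _ _ _
    _ = |a| + |b| + |c| := by rw [abs_neg]

lemma sn_eq (n : ℕ) (x : ℝ × ℝ) :
    sn n x = cosSum (Lambda n) x.1 0 / Nlat n + cosSum (Lambda n) 0 x.2 / Nlat n -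
      cosSum (Lambda n) x.1 x.2 / Nlat n := by
  simp only [sn, cosSum, mul_zero, Real.cos_zero, mul_one, one_mul]
  rw [Finset.sum_sub_distrib, Finset.sum_add_distrib]
  ring

lemma abs_sn_pow_le (n k : ℕ) (hev : Even (k + 1)) (x : ℝ × ℝ) :
    |sn n x| ^ (k + 1) ≤ 3 ^ k * ((cosSum (Lambda n) x.1 0 / Nlat n) ^ (k + 1) +
      (cosSum (Lambda n) 0 x.2 / Nlat n) ^ (k + 1) +
      (cosSum (Lambda n) x.1 x.2 / Nlat n) ^ (k + 1)) := by
  rw [sn_eq, ← hev.pow_abs (cosSum _ _ _ / _), ← hev.pow_abs (cosSum _ _ _ / _),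
    ← hev.pow_abs (cosSum _ _ _ / _)]
  exact abs_add_sub_pow_le _ _ _ k

/-- For every even `ℓ > 0` there is `C_ℓ > 0` such that for every squarefree
`n ∈ S` with `n > 1`, every `z ∈ [0,1]²` and every `s > 0`,
`∫_{B(s,z)∩[0,1]²} |sₙ(x)|^ℓ dx ≤ C_ℓ s² max_{t=1,2} (M_t(n,ℓ)/N^ℓ +
(1/N^ℓ) Σ'_{Σξ_t ≠ 0} 1/(s|ξ_t¹+⋯+ξ_t^ℓ|))`. -/
theorem stmt11 {ℓ : ℕ} (hℓ : 0 < ℓ) (hev : Even ℓ) :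
    ∃ C > 0, ∀ n ∈ S2, Squarefree n → 1 < n →
      ∀ z ∈ USq, ∀ s : ℝ, 0 < s →
        (∫ x in Box2 s z ∩ USq, |sn n x| ^ ℓ) ≤
          C * s ^ 2 * max
            ((Set.ncard {ξ : Fin ℓ → ℤ × ℤ | (∀ i, ξ i ∈ Lambda n) ∧
                ∑ i, coord 0 (ξ i) = 0} : ℝ) / (Nlat n : ℝ) ^ ℓ +
              (1 / (Nlat n : ℝ) ^ ℓ) *
                ∑ ξ ∈ (Fintype.piFinset fun _ : Fin ℓ => Lambda n).filter
                    (fun ξ => ∑ i, coord 0 (ξ i) ≠ 0),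
                  1 / (s * |((∑ i, coord 0 (ξ i) : ℤ) : ℝ)|))
            ((Set.ncard {ξ : Fin ℓ → ℤ × ℤ | (∀ i, ξ i ∈ Lambda n) ∧
                ∑ i, coord 1 (ξ i) = 0} : ℝ) / (Nlat n : ℝ) ^ ℓ +
              (1 / (Nlat n : ℝ) ^ ℓ) *
                ∑ ξ ∈ (Fintype.piFinset fun _ : Fin ℓ => Lambda n).filter
                    (fun ξ => ∑ i, coord 1 (ξ i) ≠ 0),
                  1 / (s * |((∑ i, coord 1 (ξ i) : ℤ) : ℝ)|)) := by
  obtain ⟨k, rfl⟩ : ∃ k, ℓ = k + 1 := ⟨ℓ - 1, by omega⟩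
  refine ⟨3 ^ (k + 1), by positivity, fun n _ _ _ z _ s hs => ?_⟩
  show _ ≤ _ * _ * max (latticeBound n (k + 1) 0 s) (latticeBound n (k + 1) 1 s)
  set T₀ := latticeBound n (k + 1) 0 s
  set T₁ := latticeBound n (k + 1) 1 s
  have hside : ∀ c : ℝ, c - s / 2 ≤ c + s / 2 := fun c => by linarith
  have hwidth : ∀ c : ℝ, c + s / 2 - (c - s / 2) ≤ s := fun c => by linarith
  have hF₁ := integral_cosSum_Lambda_pow_le_latticeBound_zero n (k + 1) (continuous_const (y := 0))
    (hside z.1) (hside z.2) (hwidth z.1) (hwidth z.2)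
  have hF₂ := integral_cosSum_Lambda_pow_le_latticeBound_one n (k + 1) (continuous_const (y := 0))
    (hside z.1) (hside z.2) (hwidth z.1) (hwidth z.2)
  have hF₁₂ := integral_cosSum_Lambda_pow_le_latticeBound_zero n (k + 1) continuous_id
    (hside z.1) (hside z.2) (hwidth z.1) (hwidth z.2)
  have hint : ∀ f : ℝ × ℝ → ℝ, Continuous f → IntegrableOn f (Box2 s z) := fun f hf =>
    hf.continuousOn.integrableOn_compact (isCompact_Icc.prod isCompact_Icc)
  calc ∫ x in Box2 s z ∩ USq, |sn n x| ^ (k + 1)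
      ≤ ∫ x in Box2 s z, |sn n x| ^ (k + 1) :=
        setIntegral_mono_set (hint _ (by unfold sn; fun_prop))
          (Eventually.of_forall fun x => by positivity) Set.inter_subset_left.eventuallyLE
    _ ≤ ∫ x in Box2 s z, 3 ^ k * ((cosSum (Lambda n) x.1 0 / Nlat n) ^ (k + 1) +
          (cosSum (Lambda n) 0 x.2 / Nlat n) ^ (k + 1) +
          (cosSum (Lambda n) x.1 x.2 / Nlat n) ^ (k + 1)) :=
        setIntegral_mono (hint _ (by unfold sn; fun_prop)) (hint _ (by fun_prop))
          (abs_sn_pow_le n k hev)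
    _ ≤ 3 ^ k * (s ^ 2 * T₀ + s ^ 2 * T₁ + s ^ 2 * T₀) := by
        rw [integral_const_mul, integral_add, integral_add]
        · gcongr
          exacts [hF₁, hF₂, hF₁₂]
        all_goals exact hint _ (by fun_prop)
    _ ≤ 3 ^ k * (s ^ 2 * max T₀ T₁ + s ^ 2 * max T₀ T₁ + s ^ 2 * max T₀ T₁) := by
        gcongr
        exacts [le_max_left _ _, le_max_right _ _, le_max_left _ _]
    _ = 3 ^ (k + 1) * s ^ 2 * max T₀ T₁ := by ring
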